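/- Non-triviality of C: although C is negation inconsistent, it is non-trivial; in particular, for a propositional variable p, the sequent ⇒ p (with empty antecedent) is not derivable in G3C, so not every formula is a theorem of C. -/

import Mathlib

/-- Formulas of the connexive logic C: propositional variables, strong
negation `∼`, conjunction, disjunction and implication. -/
inductive Formula : Type
  | var : Nat → Formula
  | snot : Formula → Formula
  | and : Formula → Formula → Formula
  | or : Formula → Formula → Formula
  | imp : Formula → Formula → Formula
deriving DecidableEq
/-- Derivability of sequents `Γ ⇒ A` (with `Γ` a finite multiset of formulas)
in the sequent calculus `G3C` for the connexive logic `C`. -/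
inductive Gder : Multiset Formula → Formula → Prop
  | ax {Γ n} : Gder (.var n ::ₘ Γ) (.var n)
  | axSnot {Γ n} : Gder (.snot (.var n) ::ₘ Γ) (.snot (.var n))
  | andR {Γ A B} : Gder Γ A → Gder Γ B → Gder Γ (.and A B)
  | andL {Γ A B C} : Gder (A ::ₘ B ::ₘ Γ) C → Gder (.and A B ::ₘ Γ) C
  | orR₁ {Γ A B} : Gder Γ A → Gder Γ (.or A B)
  | orR₂ {Γ A B} : Gder Γ B → Gder Γ (.or A B)
  | orL {Γ A B C} : Gder (A ::ₘ Γ) C → Gder (B ::ₘ Γ) C → Gder (.or A B ::ₘ Γ) C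
  | impR {Γ A B} : Gder (A ::ₘ Γ) B → Gder Γ (.imp A B)
  | impL {Γ A B C} : Gder (.imp A B ::ₘ Γ) A → Gder (B ::ₘ Γ) C → Gder (.imp A B ::ₘ Γ) C
  | snotSnotR {Γ A} : Gder Γ A → Gder Γ (.snot (.snot A))
  | snotSnotL {Γ A C} : Gder (A ::ₘ Γ) C → Gder (.snot (.snot A) ::ₘ Γ) C
  | snotAndR₁ {Γ A B} : Gder Γ (.snot A) → Gder Γ (.snot (.and A B))
  | snotAndR₂ {Γ A B} : Gder Γ (.snot B) → Gder Γ (.snot (.and A B))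
  | snotAndL {Γ A B C} : Gder (.snot A ::ₘ Γ) C → Gder (.snot B ::ₘ Γ) C →
      Gder (.snot (.and A B) ::ₘ Γ) C
  | snotOrR {Γ A B} : Gder Γ (.snot A) → Gder Γ (.snot B) → Gder Γ (.snot (.or A B))
  | snotOrL {Γ A B C} : Gder (.snot A ::ₘ .snot B ::ₘ Γ) C → Gder (.snot (.or A B) ::ₘ Γ) C
  | snotImpR {Γ A B} : Gder (A ::ₘ Γ) (.snot B) → Gder Γ (.snot (.imp A B))
  | snotImpL {Γ A B C} : Gder (.snot (.imp A B) ::ₘ Γ) A → Gder (.snot B ::ₘ Γ) C →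
      Gder (.snot (.imp A B) ::ₘ Γ) C

/-! A two-valued countermodel: each formula gets a truth value and, independently, a truth value for
its strong negation. Every rule of `G3C` preserves truth, so a theorem of `C` is true under every
assignment, while `p` is false when all variables are assigned `(false, false)`. -/

/-- The pair (truth of `A`, truth of `∼A`); implication is falsified connexively, `∼(A → B)` being
read as `A → ∼B`. -/
def Formula.eval (v : Nat → Bool × Bool) : Formula → Bool × Bool
  | .var n => v n
  | .snot A => (A.eval v).swap
  | .and A B => ((A.eval v).1 && (B.eval v).1, (A.eval v).2 || (B.eval v).2)
  | .or A B => ((A.eval v).1 || (B.eval v).1, (A.eval v).2 && (B.eval v).2)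
  | .imp A B => (!(A.eval v).1 || (B.eval v).1, !(A.eval v).1 || (B.eval v).2)

theorem Gder.sound {Γ : Multiset Formula} {C : Formula} (d : Gder Γ C) (v : Nat → Bool × Bool)
    (hΓ : ∀ X ∈ Γ, (X.eval v).1) : (C.eval v).1 := by
  induction d with
  | @impR _ A _ _ _ | @snotImpR _ A _ _ _ =>
    cases hA : (A.eval v).1 <;> simp_all [Formula.eval]
  | _ => simp_all [Formula.eval] <;> tauto

/-- Non-triviality of `C`: for a propositional variable `p`, the sequent
`⇒ p` is not derivable in `G3C`; hence not every formula is a theorem of `C`. -/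
theorem C_nontrivial (p : Nat) :
    ¬ Gder 0 (.var p) ∧ ¬ (∀ A : Formula, Gder 0 A) := by
  have hp : ¬ Gder 0 (.var p) := fun d => by
    simpa [Formula.eval] using d.sound (fun _ => (false, false)) (by simp)
  exact ⟨hp, fun h => hp (h _)⟩
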